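/- Let H₁ = (1,0,0,0), H₂ = (1, 0, 1/√2, 1/2), H₃ = (1, 1/√2, 0, 1/2) in ℝ⁴, and for i ≠ j set d_{ij} = arccosh( −⟨H_i,H_j⟩ / √(⟨H_i,H_i⟩⟨H_j,H_j⟩) ) and L_{ij} = 2 sinh(d_{ij}/2). Then cosh d_{12} = cosh d_{13} = 2 and cosh d_{23} = 3, hence L_{12} = L_{13} = √2 and L_{23} = 2; these satisfy L_{12}² + L_{13}² = L_{23}², and the Euclidean area of a triangle with side lengths √2, √2, 2 is 1. (Hence the maximal horoball piece in the fundamental simplex of the Coxeter tiling [(3²,4²)] has hyperbolic volume 1/2.) -/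

import Mathlib

open Real

/-- The Lorentzian bilinear form `⟨x,y⟩ = −x⁰y⁰ + x¹y¹ + x²y² + x³y³` on `ℝ⁴`. -/
def lor (x y : Fin 4 → ℝ) : ℝ :=
  -(x 0 * y 0) + x 1 * y 1 + x 2 * y 2 + x 3 * y 3

/-- Inverse hyperbolic cosine. -/
noncomputable def arcosh (x : ℝ) : ℝ := Real.log (x + Real.sqrt (x ^ 2 - 1))

/-- Heron's formula for the Euclidean area of a triangle with side lengths `a, b, c`. -/
noncomputable def heronArea (a b c : ℝ) : ℝ :=
  (1 / 4) * Real.sqrt ((a + b + c) * (-a + b + c) * (a - b + c) * (a + b - c))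

/-!
The Lorentz products give `cosh d₁₂ = cosh d₁₃ = 2` and `cosh d₂₃ = 3` directly (`H₁` has norm `-1`,
`H₂` and `H₃` have norm `-1/4`). The half-angle identity `cosh t = 1 + 2 sinh² (t/2)` turns Bolyai's
length into `L = √(2 (cosh d - 1))`, giving `√2, √2, 2`. For a right triangle Heron's product is
`(2ab)²`, so the area is half the product of the legs.
-/

theorem lor_vec (a₀ a₁ a₂ a₃ b₀ b₁ b₂ b₃ : ℝ) :
    lor ![a₀, a₁, a₂, a₃] ![b₀, b₁, b₂, b₃] = -(a₀ * b₀) + a₁ * b₁ + a₂ * b₂ + a₃ * b₃ :=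
  rfl

theorem arcosh_eq_real_arcosh : _root_.arcosh = Real.arcosh := rfl

theorem cosh_eq_one_add_two_mul_sinh_half_sq (t : ℝ) : cosh t = 1 + 2 * sinh (t / 2) ^ 2 := by
  calc cosh t = cosh (2 * (t / 2)) := by ring_nf
    _ = 1 + 2 * sinh (t / 2) ^ 2 := by rw [cosh_two_mul, cosh_sq]; ring

theorem two_mul_sinh_half_eq_sqrt {t : ℝ} (ht : 0 ≤ t) :
    2 * sinh (t / 2) = √(2 * (cosh t - 1)) := by
  have hsinh : 0 ≤ 2 * sinh (t / 2) := by
    have := sinh_nonneg_iff.2 (div_nonneg ht zero_le_two)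
    positivity
  rw [cosh_eq_one_add_two_mul_sinh_half_sq, ← sqrt_sq hsinh]
  ring_nf

theorem two_mul_sinh_half_arcosh {x : ℝ} (hx : 1 ≤ x) :
    2 * sinh (_root_.arcosh x / 2) = √(2 * (x - 1)) := by
  rw [arcosh_eq_real_arcosh, two_mul_sinh_half_eq_sqrt (arcosh_nonneg hx), cosh_arcosh hx]

theorem heronArea_of_sq_add_sq {a b c : ℝ} (ha : 0 ≤ a) (hb : 0 ≤ b)
    (h : a ^ 2 + b ^ 2 = c ^ 2) : heronArea a b c = a * b / 2 := by
  have hprod : (a + b + c) * (-a + b + c) * (a - b + c) * (a + b - c) = (2 * a * b) ^ 2 := by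
    linear_combination (c ^ 2 - a ^ 2 - b ^ 2) * h
  rw [heronArea, hprod, sqrt_sq (by positivity)]
  ring

/-- For the points `H₁, H₂, H₃` of the Coxeter simplex `[(3²,4²)]`,
`cosh d₁₂ = cosh d₁₃ = 2`, `cosh d₂₃ = 3`, the horospherical side lengths are
`√2, √2, 2` satisfying `L₁₂² + L₁₃² = L₂₃²`, and the Euclidean area of a triangle with
these side lengths is `1`. -/
theorem horoball_piece_3344 :
    let H₁ : Fin 4 → ℝ := ![1, 0, 0, 0]
    let H₂ : Fin 4 → ℝ := ![1, 0, 1 / Real.sqrt 2, 1/2]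
    let H₃ : Fin 4 → ℝ := ![1, 1 / Real.sqrt 2, 0, 1/2]
    let d : (Fin 4 → ℝ) → (Fin 4 → ℝ) → ℝ := fun x y =>
      _root_.arcosh (-(lor x y) / Real.sqrt (lor x x * lor y y))
    let L : (Fin 4 → ℝ) → (Fin 4 → ℝ) → ℝ := fun x y => 2 * Real.sinh (d x y / 2)
    (Real.cosh (d H₁ H₂) = 2 ∧ Real.cosh (d H₁ H₃) = 2 ∧ Real.cosh (d H₂ H₃) = 3) ∧
    (L H₁ H₂ = Real.sqrt 2 ∧ L H₁ H₃ = Real.sqrt 2 ∧ L H₂ H₃ = 2) ∧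
    Real.sqrt 2 ^ 2 + Real.sqrt 2 ^ 2 = (2 : ℝ) ^ 2 ∧
    heronArea (Real.sqrt 2) (Real.sqrt 2) 2 = 1 := by
  intro H₁ H₂ H₃ d L
  have one_div_sqrt_two_mul_self : 1 / √2 * (1 / √2) = (1 / 2 : ℝ) := by
    rw [div_mul_div_comm, mul_self_sqrt zero_le_two, one_mul]
  have hd12 : d H₁ H₂ = _root_.arcosh 2 := by
    simp only [d, H₁, H₂, lor_vec, one_div_sqrt_two_mul_self]; norm_num
  have hd13 : d H₁ H₃ = _root_.arcosh 2 := by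
    simp only [d, H₁, H₃, lor_vec, one_div_sqrt_two_mul_self]; norm_num
  have hd23 : d H₂ H₃ = _root_.arcosh 3 := by
    simp only [d, H₂, H₃, lor_vec, one_div_sqrt_two_mul_self]; norm_num
  have pythagoras : √2 ^ 2 + √2 ^ 2 = (2 : ℝ) ^ 2 := by norm_num
  refine ⟨?_, ?_, pythagoras, ?_⟩
  · simp only [hd12, hd13, hd23, arcosh_eq_real_arcosh]
    norm_num [cosh_arcosh]
  · simp only [L, hd12, hd13, hd23]
    norm_num [two_mul_sinh_half_arcosh]
  · rw [heronArea_of_sq_add_sq (sqrt_nonneg 2) (sqrt_nonneg 2) pythagoras,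
      mul_self_sqrt zero_le_two]
    norm_num
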